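/- Assume Ω is connected, k₁₀ ≠ 0 on Ω, the curvature relations a₆ = a·a₇ and a₁₀ = a·a₁₁ hold on Ω, B = 0 on Ω, there exist functions α, β : Ω → ℝ with Aᵢ = α·aᵢ and Bᵢ = β·aᵢ for i = 1,…,5 on Ω, and D(t,r) ≠ 0 for all (t,r) ∈ Ω. Then the fraction λ := F/D is constant on Ω (i.e. ∂_t(F/D) = ∂_r(F/D) = 0). -/

import Mathlib

noncomputable section
open Real Set

/-- The base space `(t,r)`. -/
abbrev P2 := ℝ × ℝ
/-- The space of tuples `(t,r,ṫ,ṙ,w)`. -/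
abbrev P5 := ℝ × ℝ × ℝ × ℝ × ℝ

/-- `∂f/∂t` -/
def pT (f : P5 → ℝ) (p : P5) : ℝ := fderiv ℝ f p (1, 0, 0, 0, 0)
/-- `∂f/∂r` -/
def pR (f : P5 → ℝ) (p : P5) : ℝ := fderiv ℝ f p (0, 1, 0, 0, 0)
/-- `∂f/∂ṫ` -/
def pTd (f : P5 → ℝ) (p : P5) : ℝ := fderiv ℝ f p (0, 0, 1, 0, 0)
/-- `∂f/∂ṙ` -/
def pRd (f : P5 → ℝ) (p : P5) : ℝ := fderiv ℝ f p (0, 0, 0, 1, 0)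
/-- `∂f/∂w` -/
def pW (f : P5 → ℝ) (p : P5) : ℝ := fderiv ℝ f p (0, 0, 0, 0, 1)

/-- `∂k/∂t` for functions of `(t,r)` only. -/
def dt2 (k : P2 → ℝ) (q : P2) : ℝ := fderiv ℝ k q (1, 0)
/-- `∂k/∂r` for functions of `(t,r)` only. -/
def dr2 (k : P2 → ℝ) (q : P2) : ℝ := fderiv ℝ k q (0, 1)

/-- base point `(t,r)` of `p = (t,r,ṫ,ṙ,w)` -/
def bp (p : P5) : P2 := (p.1, p.2.1)
/-- the velocity `ṫ` -/
def vT (p : P5) : ℝ := p.2.2.1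
/-- the velocity `ṙ` -/
def vR (p : P5) : ℝ := p.2.2.2.1
/-- the velocity `w` -/
def vW (p : P5) : ℝ := p.2.2.2.2

/-- the horizontal derivative `δ_t f` -/
def delT (k : ℕ → P2 → ℝ) (f : P5 → ℝ) (p : P5) : ℝ :=
  pT f p - (k 1 (bp p) * vT p + k 2 (bp p) * vR p) * pTd f p
    - (k 4 (bp p) * vT p + k 6 (bp p) * vR p) * pRd f p
    - k 8 (bp p) * vW p * pW f p

/-- the horizontal derivative `δ_r f` -/
def delR (k : ℕ → P2 → ℝ) (f : P5 → ℝ) (p : P5) : ℝ :=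
  pR f p - (k 2 (bp p) * vT p + k 3 (bp p) * vR p) * pTd f p
    - (k 6 (bp p) * vT p + k 5 (bp p) * vR p) * pRd f p
    - k 9 (bp p) * vW p * pW f p

/-- the operator `δ_w f` -/
def delW (k : ℕ → P2 → ℝ) (f : P5 → ℝ) (p : P5) : ℝ :=
  vW p * k 7 (bp p) * pTd f p + vW p * k 10 (bp p) * pRd f p
    + (k 8 (bp p) * vT p + k 9 (bp p) * vR p) * pW f p

/-- curvature coefficient `a₁` -/
def a1 (k : ℕ → P2 → ℝ) (q : P2) : ℝ :=
  dr2 (k 1) q - dt2 (k 2) q + k 3 q * k 4 q - k 2 q * k 6 q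
/-- curvature coefficient `a₂` -/
def a2 (k : ℕ → P2 → ℝ) (q : P2) : ℝ :=
  dr2 (k 2) q - dt2 (k 3) q + (k 2 q)^2 + k 3 q * k 6 q - k 1 q * k 3 q - k 2 q * k 5 q
/-- curvature coefficient `a₃` -/
def a3 (k : ℕ → P2 → ℝ) (q : P2) : ℝ :=
  dr2 (k 4) q - dt2 (k 6) q + k 1 q * k 6 q + k 4 q * k 5 q - k 2 q * k 4 q - (k 6 q)^2
/-- curvature coefficient `a₄` -/
def a4 (k : ℕ → P2 → ℝ) (q : P2) : ℝ :=
  dr2 (k 6) q - dt2 (k 5) q + k 2 q * k 6 q - k 3 q * k 4 q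
/-- curvature coefficient `a₅` -/
def a5 (k : ℕ → P2 → ℝ) (q : P2) : ℝ := dr2 (k 8) q - dt2 (k 9) q
/-- curvature coefficient `a₆` -/
def a6 (k : ℕ → P2 → ℝ) (q : P2) : ℝ :=
  -dt2 (k 7) q + k 7 q * k 8 q - k 1 q * k 7 q - k 2 q * k 10 q
/-- curvature coefficient `a₇` -/
def a7 (k : ℕ → P2 → ℝ) (q : P2) : ℝ :=
  -dt2 (k 10) q + k 8 q * k 10 q - k 4 q * k 7 q - k 6 q * k 10 q
/-- curvature coefficient `a₈` -/
def a8 (k : ℕ → P2 → ℝ) (q : P2) : ℝ :=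
  -dt2 (k 8) q + k 1 q * k 8 q + k 4 q * k 9 q - (k 8 q)^2
/-- curvature coefficient `a₉` -/
def a9 (k : ℕ → P2 → ℝ) (q : P2) : ℝ :=
  -dt2 (k 9) q + k 2 q * k 8 q + k 6 q * k 9 q - k 8 q * k 9 q
/-- curvature coefficient `a₁₀` -/
def a10 (k : ℕ → P2 → ℝ) (q : P2) : ℝ :=
  -dr2 (k 7) q + k 7 q * k 9 q - k 2 q * k 7 q - k 3 q * k 10 q
/-- curvature coefficient `a₁₁` -/
def a11 (k : ℕ → P2 → ℝ) (q : P2) : ℝ :=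
  -dr2 (k 10) q + k 9 q * k 10 q - k 6 q * k 7 q - k 5 q * k 10 q
/-- curvature coefficient `a₁₂` -/
def a12 (k : ℕ → P2 → ℝ) (q : P2) : ℝ :=
  -dr2 (k 8) q + k 2 q * k 8 q + k 6 q * k 9 q - k 8 q * k 9 q
/-- curvature coefficient `a₁₃` -/
def a13 (k : ℕ → P2 → ℝ) (q : P2) : ℝ :=
  -dr2 (k 9) q + k 3 q * k 8 q + k 5 q * k 9 q - (k 9 q)^2

/-- `a = k₇/k₁₀` -/
def aa (k : ℕ → P2 → ℝ) (q : P2) : ℝ := k 7 q / k 10 q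
/-- `b = k₈/k₁₀` -/
def bb (k : ℕ → P2 → ℝ) (q : P2) : ℝ := k 8 q / k 10 q
/-- `c = (k₉k₁₀ − k₇k₈)/k₁₀²` -/
def cc (k : ℕ → P2 → ℝ) (q : P2) : ℝ := (k 9 q * k 10 q - k 7 q * k 8 q) / (k 10 q)^2

/-- `u = ṫ − a·ṙ` -/
def uV (k : ℕ → P2 → ℝ) (p : P5) : ℝ := vT p - aa k (bp p) * vR p
/-- `v = c·ṙ² + 2b·ṫ·ṙ − w²` -/
def vV (k : ℕ → P2 → ℝ) (p : P5) : ℝ :=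
  cc k (bp p) * (vR p)^2 + 2 * bb k (bp p) * vT p * vR p - (vW p)^2
/-- `z = v/u²` -/
def zV (k : ℕ → P2 → ℝ) (p : P5) : ℝ := vV k p / (uV k p)^2

/-- coefficient `A` -/
def Ac (k : ℕ → P2 → ℝ) (q : P2) : ℝ :=
  bb k q * (aa k q * a1 k q + a2 k q) + (aa k q * bb k q + cc k q) * (aa k q * a3 k q + a4 k q)
    - a5 k q * (2 * aa k q * bb k q + cc k q)
/-- coefficient `B` -/
def Bc (k : ℕ → P2 → ℝ) (q : P2) : ℝ :=
  aa k q * (aa k q * a3 k q + a4 k q) - (aa k q * a1 k q + a2 k q)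
/-- coefficient `C` -/
def Cc (k : ℕ → P2 → ℝ) (q : P2) : ℝ :=
  (aa k q * bb k q + cc k q) * a3 k q + bb k q * (aa k q * a3 k q + a4 k q)
    + bb k q * (a1 k q - 2 * a5 k q)
/-- coefficient `D` -/
def Dc (k : ℕ → P2 → ℝ) (q : P2) : ℝ := aa k q * a3 k q - a1 k q + a5 k q
/-- coefficient `E` -/
def Ec (k : ℕ → P2 → ℝ) (q : P2) : ℝ := bb k q * a3 k q
/-- coefficient `F` -/
def Fc (k : ℕ → P2 → ℝ) (q : P2) : ℝ := aa k q * a3 k q - a1 k q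

/-- `M = 2(k₁ − k₄a)` -/
def Mc (k : ℕ → P2 → ℝ) (q : P2) : ℝ := 2 * (k 1 q - k 4 q * aa k q)
/-- `M̃ = M − 2k₈` -/
def Mtc (k : ℕ → P2 → ℝ) (q : P2) : ℝ := Mc k q - 2 * k 8 q
/-- `N = 2(k₂ − k₆a)` -/
def Nc (k : ℕ → P2 → ℝ) (q : P2) : ℝ := 2 * (k 2 q - k 6 q * aa k q)
/-- `Ñ = N − 2k₉` -/
def Ntc (k : ℕ → P2 → ℝ) (q : P2) : ℝ := Nc k q - 2 * k 9 q

/-- iterated bracket coefficient `A₁` -/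
def A1 (k : ℕ → P2 → ℝ) (q : P2) : ℝ := dt2 (a1 k) q + a3 k q * k 2 q - a2 k q * k 4 q
/-- iterated bracket coefficient `A₂` -/
def A2 (k : ℕ → P2 → ℝ) (q : P2) : ℝ :=
  dt2 (a2 k) q + a2 k q * k 1 q - a1 k q * k 2 q + a4 k q * k 2 q - a2 k q * k 6 q
/-- iterated bracket coefficient `A₃` -/
def A3 (k : ℕ → P2 → ℝ) (q : P2) : ℝ :=
  dt2 (a3 k) q - a3 k q * k 1 q + a1 k q * k 4 q - a4 k q * k 4 q + a3 k q * k 6 q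
/-- iterated bracket coefficient `A₄` -/
def A4 (k : ℕ → P2 → ℝ) (q : P2) : ℝ := dt2 (a4 k) q + a2 k q * k 4 q - a3 k q * k 2 q
/-- iterated bracket coefficient `A₅` -/
def A5 (k : ℕ → P2 → ℝ) (q : P2) : ℝ := dt2 (a5 k) q
/-- iterated bracket coefficient `B₁` -/
def B1 (k : ℕ → P2 → ℝ) (q : P2) : ℝ := dr2 (a1 k) q + a3 k q * k 3 q - a2 k q * k 6 q
/-- iterated bracket coefficient `B₂` -/
def B2 (k : ℕ → P2 → ℝ) (q : P2) : ℝ :=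
  dr2 (a2 k) q + a2 k q * k 2 q - a1 k q * k 3 q + a4 k q * k 3 q - a2 k q * k 5 q
/-- iterated bracket coefficient `B₃` -/
def B3 (k : ℕ → P2 → ℝ) (q : P2) : ℝ :=
  dr2 (a3 k) q - a3 k q * k 2 q + a1 k q * k 6 q - a4 k q * k 6 q + a3 k q * k 5 q
/-- iterated bracket coefficient `B₄` -/
def B4 (k : ℕ → P2 → ℝ) (q : P2) : ℝ := dr2 (a4 k) q + a2 k q * k 6 q - a3 k q * k 3 q
/-- iterated bracket coefficient `B₅` -/
def B5 (k : ℕ → P2 → ℝ) (q : P2) : ℝ := dr2 (a5 k) q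

/-- the domain `Ω × ℝ² × (0,∞)` -/
def D5 (Ω : Set P2) : Set P5 := {p | bp p ∈ Ω ∧ 0 < vW p}

/-- the set `S(t,r,z₀)` of velocities -/
def Sset (k : ℕ → P2 → ℝ) (q : P2) (z0 : ℝ) : Set (ℝ × ℝ) :=
  {v | v.1 - aa k q * v.2 > 0 ∧
    cc k q * v.2^2 + 2 * bb k q * v.1 * v.2 - z0 * (v.1 - aa k q * v.2)^2 > 0}

/-- `∂Ξ/∂t` for functions of `(t,r,z)` -/
def dT3 (f : ℝ × ℝ × ℝ → ℝ) (s : ℝ × ℝ × ℝ) : ℝ := fderiv ℝ f s (1, 0, 0)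
/-- `∂Ξ/∂r` for functions of `(t,r,z)` -/
def dR3 (f : ℝ × ℝ × ℝ → ℝ) (s : ℝ × ℝ × ℝ) : ℝ := fderiv ℝ f s (0, 1, 0)
/-- `∂Ξ/∂z` for functions of `(t,r,z)` -/
def dZ3 (f : ℝ × ℝ × ℝ → ℝ) (s : ℝ × ℝ × ℝ) : ℝ := fderiv ℝ f s (0, 0, 1)

/-- the domain `Ω × I ⊆ ℝ³` -/
def OI (Ω : Set P2) (I : Set ℝ) : Set (ℝ × ℝ × ℝ) := {s | (s.1, s.2.1) ∈ Ω ∧ s.2.2 ∈ I}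


section Aux

open Filter

lemma fdv_add {f g : P2 → ℝ} {q v : P2} (hf : DifferentiableAt ℝ f q)
    (hg : DifferentiableAt ℝ g q) :
    fderiv ℝ (fun x => f x + g x) q v = fderiv ℝ f q v + fderiv ℝ g q v := by
  rw [fderiv_fun_add hf hg]; simp

lemma fdv_sub {f g : P2 → ℝ} {q v : P2} (hf : DifferentiableAt ℝ f q)
    (hg : DifferentiableAt ℝ g q) :
    fderiv ℝ (fun x => f x - g x) q v = fderiv ℝ f q v - fderiv ℝ g q v := by
  rw [fderiv_fun_sub hf hg]; simp

lemma fdv_mul {f g : P2 → ℝ} {q v : P2} (hf : DifferentiableAt ℝ f q)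
    (hg : DifferentiableAt ℝ g q) :
    fderiv ℝ (fun x => f x * g x) q v = f q * fderiv ℝ g q v + fderiv ℝ f q v * g q := by
  rw [fderiv_fun_mul hf hg]; simp [smul_eq_mul]; ring

lemma fdv_div {f g : P2 → ℝ} {q : P2} (v : P2) (hf : DifferentiableAt ℝ f q)
    (hg : DifferentiableAt ℝ g q) (h0 : g q ≠ 0) :
    fderiv ℝ (fun x => f x / g x) q v
      = (fderiv ℝ f q v * g q - f q * fderiv ℝ g q v) / g q ^ 2 := by
  have hq : DifferentiableAt ℝ (fun x => f x / g x) q := by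
    simp only [div_eq_mul_inv]
    exact hf.mul (hg.inv h0)
  have hgne : ∀ᶠ x in nhds q, g x ≠ 0 := hg.continuousAt.eventually_ne h0
  have heq : f =ᶠ[nhds q] fun x => (f x / g x) * g x :=
    hgne.mono fun x hx => by field_simp
  have h1 : fderiv ℝ f q = fderiv ℝ (fun x => (f x / g x) * g x) q := heq.fderiv_eq
  have h2 : fderiv ℝ f q v = (f q / g q) * fderiv ℝ g q v
      + g q * fderiv ℝ (fun x => f x / g x) q v := by
    rw [h1, fderiv_fun_mul hq hg]
    simp [smul_eq_mul]
  field_simp at h2 ⊢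
  linarith [h2]

lemma diffat_fderiv_apply {f : P2 → ℝ} {q : P2} (h : ContDiffAt ℝ (⊤ : ℕ∞) f q) (v : P2) :
    DifferentiableAt ℝ (fun x => fderiv ℝ f x v) q := by
  have h1 : ContDiffAt ℝ (⊤ : ℕ∞) (fderiv ℝ f) q := h.fderiv_right (by simp)
  have h2 := h1.differentiableAt (by simp)
  exact (ContinuousLinearMap.apply ℝ ℝ v).differentiableAt.comp q h2

lemma key (k : ℕ → P2 → ℝ) (q : P2) (v : P2) (α c1 c2 c4 c6 : ℝ)
    (df1 : DifferentiableAt ℝ (a1 k) q) (df3 : DifferentiableAt ℝ (a3 k) q)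
    (df5 : DifferentiableAt ℝ (a5 k) q) (dfa : DifferentiableAt ℝ (aa k) q)
    (hDne : Dc k q ≠ 0)
    (e_aa : fderiv ℝ (aa k) q v = (aa k q)^2 * c4 + aa k q * (c6 - c1) - c2)
    (e_a3 : fderiv ℝ (a3 k) q v
      = α * a3 k q + a3 k q * c1 - a1 k q * c4 + a4 k q * c4 - a3 k q * c6)
    (e_a1 : fderiv ℝ (a1 k) q v = α * a1 k q - a3 k q * c2 + a2 k q * c4)
    (e_a5 : fderiv ℝ (a5 k) q v = α * a5 k q)
    (hBq : Bc k q = 0) :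
    fderiv ℝ (fun q' => Fc k q' / Dc k q') q v = 0 := by
  have eF : fderiv ℝ (Fc k) q v = α * Fc k q := by
    have h : fderiv ℝ (Fc k) q v
        = (aa k q * fderiv ℝ (a3 k) q v + fderiv ℝ (aa k) q v * a3 k q)
          - fderiv ℝ (a1 k) q v := by
      unfold Fc
      rw [fdv_sub (f := fun x => aa k x * a3 k x) (dfa.mul df3) df1, fdv_mul dfa df3]
    rw [h, e_a3, e_a1, e_aa]
    unfold Bc at hBq
    unfold Fc
    linear_combination c4 * hBq
  have eD : fderiv ℝ (Dc k) q v = α * Dc k q := by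
    have h : fderiv ℝ (Dc k) q v
        = ((aa k q * fderiv ℝ (a3 k) q v + fderiv ℝ (aa k) q v * a3 k q)
          - fderiv ℝ (a1 k) q v) + fderiv ℝ (a5 k) q v := by
      unfold Dc
      rw [fdv_add (f := fun x => aa k x * a3 k x - a1 k x) ((dfa.mul df3).sub df1) df5,
        fdv_sub (f := fun x => aa k x * a3 k x) (dfa.mul df3) df1, fdv_mul dfa df3]
    rw [h, e_a3, e_a1, e_aa, e_a5]
    unfold Bc at hBq
    unfold Dc
    linear_combination c4 * hBq
  have dfF' : DifferentiableAt ℝ (Fc k) q := by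
    unfold Fc; exact (dfa.mul df3).sub df1
  have dfD' : DifferentiableAt ℝ (Dc k) q := by
    unfold Dc; exact ((dfa.mul df3).sub df1).add df5
  rw [fdv_div v dfF' dfD' hDne, eF, eD]
  ring

end Aux

/-- Under the consistency conditions coming from the Lie brackets,
`λ = F/D` is constant on the connected set `Ω`. -/
theorem stmt15 (Ω : Set P2) (hΩopen : IsOpen Ω) (hΩne : Ω.Nonempty)
    (hΩconn : IsConnected Ω)
    (k : ℕ → P2 → ℝ) (hk : ∀ i, ContDiffOn ℝ (⊤ : ℕ∞) (k i) Ω)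
    (hk10 : ∀ q ∈ Ω, k 10 q ≠ 0)
    (hrel6 : ∀ q ∈ Ω, a6 k q = aa k q * a7 k q)
    (hrel10 : ∀ q ∈ Ω, a10 k q = aa k q * a11 k q)
    (hB : ∀ q ∈ Ω, Bc k q = 0)
    (hAprop : ∃ α : P2 → ℝ, ∀ q ∈ Ω,
      A1 k q = α q * a1 k q ∧ A2 k q = α q * a2 k q ∧ A3 k q = α q * a3 k q ∧
      A4 k q = α q * a4 k q ∧ A5 k q = α q * a5 k q)
    (hBprop : ∃ β : P2 → ℝ, ∀ q ∈ Ω,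
      B1 k q = β q * a1 k q ∧ B2 k q = β q * a2 k q ∧ B3 k q = β q * a3 k q ∧
      B4 k q = β q * a4 k q ∧ B5 k q = β q * a5 k q)
    (hD : ∀ q ∈ Ω, Dc k q ≠ 0) :
    ∀ q ∈ Ω,
      dt2 (fun q' => Fc k q' / Dc k q') q = 0 ∧
      dr2 (fun q' => Fc k q' / Dc k q') q = 0 := by
  obtain ⟨α, hA⟩ := hAprop
  obtain ⟨β, hBp⟩ := hBprop
  intro q hq
  have hmem : Ω ∈ nhds q := hΩopen.mem_nhds hq
  have hkq : ∀ i, ContDiffAt ℝ (⊤ : ℕ∞) (k i) q := fun i => (hk i).contDiffAt hmem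
  have hkd : ∀ i, DifferentiableAt ℝ (k i) q := fun i => (hkq i).differentiableAt (by simp)
  have hdk : ∀ i v, DifferentiableAt ℝ (fun x => fderiv ℝ (k i) x v) q :=
    fun i v => diffat_fderiv_apply (hkq i) v
  have k10 : k 10 q ≠ 0 := hk10 q hq
  have df1 : DifferentiableAt ℝ (a1 k) q := by
    unfold a1 dt2 dr2
    exact (((hdk 1 (0,1)).sub (hdk 2 (1,0))).add ((hkd 3).mul (hkd 4))).sub
      ((hkd 2).mul (hkd 6))
  have df3 : DifferentiableAt ℝ (a3 k) q := by
    unfold a3 dt2 dr2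
    exact (((((hdk 4 (0,1)).sub (hdk 6 (1,0))).add ((hkd 1).mul (hkd 6))).add
      ((hkd 4).mul (hkd 5))).sub ((hkd 2).mul (hkd 4))).sub ((hkd 6).pow 2)
  have df5 : DifferentiableAt ℝ (a5 k) q := by
    unfold a5 dt2 dr2
    exact (hdk 8 (0,1)).sub (hdk 9 (1,0))
  have dfa : DifferentiableAt ℝ (aa k) q := by
    unfold aa
    simp only [div_eq_mul_inv]
    exact (hkd 7).mul ((hkd 10).inv k10)
  have e_aaT : fderiv ℝ (aa k) q (1,0)
      = (aa k q)^2 * k 4 q + aa k q * (k 6 q - k 1 q) - k 2 q := by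
    have h := fdv_div (f := k 7) (g := k 10) (q := q) (1,0) (hkd 7) (hkd 10) k10
    have h6 := hrel6 q hq
    unfold a6 a7 aa dt2 at h6
    have h6' : fderiv ℝ (k 7) q (1,0)
        = k 7 q * k 8 q - k 1 q * k 7 q - k 2 q * k 10 q
          - k 7 q / k 10 q * (-fderiv ℝ (k 10) q (1,0) + k 8 q * k 10 q
            - k 4 q * k 7 q - k 6 q * k 10 q) := by
      linear_combination -h6
    unfold aa
    rw [h, h6']
    field_simp
    ring
  have e_aaR : fderiv ℝ (aa k) q (0,1)
      = (aa k q)^2 * k 6 q + aa k q * (k 5 q - k 2 q) - k 3 q := by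
    have h := fdv_div (f := k 7) (g := k 10) (q := q) (0,1) (hkd 7) (hkd 10) k10
    have h10 := hrel10 q hq
    unfold a10 a11 aa dr2 at h10
    have h10' : fderiv ℝ (k 7) q (0,1)
        = k 7 q * k 9 q - k 2 q * k 7 q - k 3 q * k 10 q
          - k 7 q / k 10 q * (-fderiv ℝ (k 10) q (0,1) + k 9 q * k 10 q
            - k 6 q * k 7 q - k 5 q * k 10 q) := by
      linear_combination -h10
    unfold aa
    rw [h, h10']
    field_simp
    ring
  have e_a3T : fderiv ℝ (a3 k) q (1,0)
      = α q * a3 k q + a3 k q * k 1 q - a1 k q * k 4 q + a4 k q * k 4 q - a3 k q * k 6 q := by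
    have h3 := (hA q hq).2.2.1
    unfold A3 dt2 at h3
    linarith [h3]
  have e_a1T : fderiv ℝ (a1 k) q (1,0)
      = α q * a1 k q - a3 k q * k 2 q + a2 k q * k 4 q := by
    have h1 := (hA q hq).1
    unfold A1 dt2 at h1
    linarith [h1]
  have e_a5T : fderiv ℝ (a5 k) q (1,0) = α q * a5 k q := by
    have h5 := (hA q hq).2.2.2.2
    unfold A5 dt2 at h5
    linarith [h5]
  have e_a3R : fderiv ℝ (a3 k) q (0,1)
      = β q * a3 k q + a3 k q * k 2 q - a1 k q * k 6 q + a4 k q * k 6 q - a3 k q * k 5 q := by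
    have h3 := (hBp q hq).2.2.1
    unfold B3 dr2 at h3
    linarith [h3]
  have e_a1R : fderiv ℝ (a1 k) q (0,1)
      = β q * a1 k q - a3 k q * k 3 q + a2 k q * k 6 q := by
    have h1 := (hBp q hq).1
    unfold B1 dr2 at h1
    linarith [h1]
  have e_a5R : fderiv ℝ (a5 k) q (0,1) = β q * a5 k q := by
    have h5 := (hBp q hq).2.2.2.2
    unfold B5 dr2 at h5
    linarith [h5]
  have hBq := hB q hq
  constructor
  · unfold dt2
    exact key k q (1,0) (α q) (k 1 q) (k 2 q) (k 4 q) (k 6 q) df1 df3 df5 dfa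
      (hD q hq) e_aaT e_a3T e_a1T e_a5T hBq
  · unfold dr2
    exact key k q (0,1) (β q) (k 2 q) (k 3 q) (k 6 q) (k 5 q) df1 df3 df5 dfa
      (hD q hq) e_aaR e_a3R e_a1R e_a5R hBq
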